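/- arXiv:0704.1859 — 2 statements merged into one kernel-verified Lean document; each statement's English description precedes it below -/
import Mathlib

section
/- Let f_n ≥ 0 for n ∈ ℕ and let f = Σ_{n=0}^∞ f_n χ_n be the corresponding radial function on the free group F. Then the following are equivalent: (i) there exists a constant C such that ⟨f ∗ χ_E, χ_{F′}⟩ ≤ C · |E|^{1/2} · |F′|^{1/2} for all finite subsets E, F′ ⊆ F (i.e. λ(f) is of restricted weak type (2,2)); (ii) Σ_{n=0}^∞ f_n q^{n/2} < ∞ (i.e. f belongs to the Lorentz space L^{(2,1)} of F with counting measure). -/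
open scoped ENNReal

noncomputable section

/-- Word length on the free group: the number of letters of the reduced word. -/
def wlen {α : Type*} [DecidableEq α] (x : FreeGroup α) : ℕ := x.toWord.length

/-- Convolution of `ℝ≥0∞`-valued functions on a group:
`(f ∗ g)(x) = Σ_y f(y) g(y⁻¹ x)`. -/
def conv {G : Type*} [Group G] (f g : G → ℝ≥0∞) (x : G) : ℝ≥0∞ :=
  ∑' y, f y * g (y⁻¹ * x)

/-- Indicator function (ℝ≥0∞-valued) of a finite set. -/
def finInd {G : Type*} [DecidableEq G] (E : Finset G) (x : G) : ℝ≥0∞ :=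
  if x ∈ E then 1 else 0

/-!
Expanding the pairing, `⟨f ∗ χ_E, χ_F⟩ = Σ_n f_n N_n(E, F)`, where `N_n(E, F)` counts the pairs
`(x, e) ∈ F × E` with `|x e⁻¹| = n`. Writing the reduced words as `x = u t`, `e = w t` with
`x e⁻¹ = u w⁻¹` reduced, a pair with `|u| = k`, `|w| = ℓ` is determined by `x` and the first `ℓ`
letters of `e`, and also by `e` and the first `k` letters of `x`. As there are at most `2 q^j`
reduced words of length `j`, `N_n ≤ Σ_{k + ℓ = n} min (2 |E| q^k) (2 |F| q^ℓ)`, and summing the two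
geometric tails on either side of the crossing point gives `N_n ≤ 8 (|E| |F| q^n)^(1/2)`.

Conversely, let `E = F` be the ball of radius `m`, of size at most `4 q^m`. Splitting a word `g` of
length `n ≤ m` as `g₁ g₂` with `|g₁| = ⌊n/2⌋`, every `z` of length `m - ⌈n/2⌉` gives the pair
`(g₁ z, g₂⁻¹ z)` in the ball, so `N_n ≥ q^(m + ⌊n/2⌋)`, and the restricted weak type bound
`C |B_m|` forces `Σ_{n < m} f_n q^(n/2) ≤ 4 q C` for every `m`.
-/

open Finset

theorem sum_range_succ_pow_le_two_mul_pow {R : Type*} [CommSemiring R] [PartialOrder R]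
    [IsOrderedRing R] {q : R} (hq : 2 ≤ q) (M : ℕ) :
    ∑ i ∈ range (M + 1), q ^ i ≤ 2 * q ^ M := by
  induction M with
  | zero => simpa using one_le_two
  | succ M ih =>
    have hq0 : 0 ≤ q := zero_le_two.trans hq
    calc ∑ i ∈ range (M + 2), q ^ i = ∑ i ∈ range (M + 1), q ^ i + q ^ (M + 1) :=
          sum_range_succ ..
      _ ≤ 2 * q ^ M + q ^ (M + 1) := by gcongr
      _ ≤ q ^ (M + 1) + q ^ (M + 1) := by
          gcongr; rw [pow_succ']; exact mul_le_mul_of_nonneg_right hq (pow_nonneg hq0 _)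
      _ = 2 * q ^ (M + 1) := (two_mul _).symm

namespace ENNReal

theorem sum_mul_pow_le_two_mul {ι : Type*} {q c s : ℝ≥0∞} (hq : 2 ≤ q) {S : Finset ι}
    {k : ι → ℕ} (hk : Set.InjOn k S) (h : ∀ i ∈ S, c * q ^ k i ≤ s) :
    ∑ i ∈ S, c * q ^ k i ≤ 2 * s := by
  classical
  rw [← sum_image (f := fun j => c * q ^ j) hk]
  obtain hS | hS := (S.image k).eq_empty_or_nonempty
  · simp [hS]
  obtain ⟨i₀, hi₀, hmax⟩ := mem_image.1 ((S.image k).max'_mem hS)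
  calc ∑ j ∈ S.image k, c * q ^ j ≤ ∑ j ∈ range (k i₀ + 1), c * q ^ j :=
        sum_le_sum_of_subset fun j hj =>
          mem_range.2 (Nat.lt_succ_of_le (hmax ▸ (S.image k).le_max' j hj))
    _ = c * ∑ j ∈ range (k i₀ + 1), q ^ j := (mul_sum ..).symm
    _ ≤ c * (2 * q ^ k i₀) := by gcongr; exact sum_range_succ_pow_le_two_mul_pow hq _
    _ = 2 * (c * q ^ k i₀) := by ring
    _ ≤ 2 * s := by gcongr; exact h i₀ hi₀

theorem le_rpow_half_of_le_of_mul_eq {x y P : ℝ≥0∞} (hxy : x ≤ y) (h : x * y = P) :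
    x ≤ P ^ (1 / 2 : ℝ) := by
  rw [one_div, le_rpow_inv_iff two_pos, rpow_two, sq, ← h]
  gcongr

/-- The two bounds multiply to `A B q ^ n`, so the smaller one is at most its square root; the
smaller ones form two geometric sequences of ratio at least `2`. -/
theorem sum_antidiagonal_le_four_mul_rpow_half {q A B : ℝ≥0∞} (hq : 2 ≤ q) {n : ℕ}
    {f : ℕ × ℕ → ℝ≥0∞} (hA : ∀ p ∈ antidiagonal n, f p ≤ A * q ^ p.1)
    (hB : ∀ p ∈ antidiagonal n, f p ≤ B * q ^ p.2) :
    ∑ p ∈ antidiagonal n, f p ≤ 4 * (A * B * q ^ n) ^ (1 / 2 : ℝ) := by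
  classical
  set s := (A * B * q ^ n) ^ (1 / 2 : ℝ)
  have hprod : ∀ p ∈ antidiagonal n, A * q ^ p.1 * (B * q ^ p.2) = A * B * q ^ n := by
    intro p hp
    rw [← mem_antidiagonal.1 hp, pow_add]; ring
  have hinj₁ : Set.InjOn Prod.fst (antidiagonal n : Set (ℕ × ℕ)) := fun p hp p' hp' h =>
    Prod.ext h (by have := mem_antidiagonal.1 hp; have := mem_antidiagonal.1 hp'; omega)
  have hinj₂ : Set.InjOn Prod.snd (antidiagonal n : Set (ℕ × ℕ)) := fun p hp p' hp' h =>
    Prod.ext (by have := mem_antidiagonal.1 hp; have := mem_antidiagonal.1 hp'; omega) h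
  set T := (antidiagonal n).filter fun p => A * q ^ p.1 ≤ B * q ^ p.2
  set T' := (antidiagonal n).filter fun p => ¬ A * q ^ p.1 ≤ B * q ^ p.2
  calc ∑ p ∈ antidiagonal n, f p = ∑ p ∈ T, f p + ∑ p ∈ T', f p :=
        (sum_filter_add_sum_filter_not ..).symm
    _ ≤ ∑ p ∈ T, A * q ^ p.1 + ∑ p ∈ T', B * q ^ p.2 := by
        gcongr with p hp p hp
        · exact hA p (filter_subset _ _ hp)
        · exact hB p (filter_subset _ _ hp)
    _ ≤ 2 * s + 2 * s := by
        gcongr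
        · refine sum_mul_pow_le_two_mul hq (hinj₁.mono (coe_subset.2 (filter_subset _ _)))
            fun p hp => ?_
          obtain ⟨hp, hle⟩ := mem_filter.1 hp
          exact le_rpow_half_of_le_of_mul_eq hle (hprod p hp)
        · refine sum_mul_pow_le_two_mul hq (hinj₂.mono (coe_subset.2 (filter_subset _ _)))
            fun p hp => ?_
          obtain ⟨hp, hlt⟩ := mem_filter.1 hp
          exact le_rpow_half_of_le_of_mul_eq (not_le.1 hlt).le (by rw [mul_comm, hprod p hp])
    _ = 4 * s := by ring

theorem rpow_natCast_div_two_le {x : ℝ≥0∞} (hx : 1 ≤ x) (n : ℕ) :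
    x ^ ((n : ℝ) / 2) ≤ x * x ^ (n / 2) := by
  have hn : (n : ℝ) ≤ 2 * ((n / 2 : ℕ) : ℝ) + 2 := by
    exact_mod_cast (by omega : n ≤ 2 * (n / 2) + 2)
  calc x ^ ((n : ℝ) / 2) ≤ x ^ ((n / 2 + 1 : ℕ) : ℝ) :=
        rpow_le_rpow_of_exponent_le hx (by push_cast; linarith)
    _ = x * x ^ (n / 2) := by rw [rpow_natCast, pow_succ']

end ENNReal

theorem tsum_mul_finInd {G : Type*} [DecidableEq G] (f : G → ℝ≥0∞) (E : Finset G) :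
    ∑' x, f x * finInd E x = ∑ x ∈ E, f x := by
  rw [tsum_eq_sum (s := E) fun x hx => by simp [finInd, hx]]
  exact sum_congr rfl fun x hx => by simp [finInd, hx]

theorem tsum_conv_finInd_mul_finInd {G : Type*} [Group G] [DecidableEq G] (φ : G → ℝ≥0∞)
    (E F : Finset G) :
    ∑' x, conv φ (finInd E) x * finInd F x = ∑ p ∈ F ×ˢ E, φ (p.1 * p.2⁻¹) := by
  have hconv (x : G) : conv φ (finInd E) x = ∑ e ∈ E, φ (x * e⁻¹) := by
    rw [conv, ← (Equiv.mulLeft x).tsum_eq, ← (Equiv.inv G).tsum_eq, ← tsum_mul_finInd]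
    simp
  simp_rw [hconv, tsum_mul_finInd, sum_product]

theorem sum_comp_eq_tsum_mul_card_filter {ι : Type*} (s : Finset ι) (L : ι → ℕ)
    (ψ : ℕ → ℝ≥0∞) : ∑ i ∈ s, ψ (L i) = ∑' n, ψ n * #(s.filter (L · = n)) := by
  rw [sum_comp, tsum_eq_sum (s := s.image L) fun n hn => ?_]
  · exact sum_congr rfl fun n _ => by rw [nsmul_eq_mul, mul_comm]
  · rw [filter_false_of_mem fun i hi (hL : L i = n) => hn (hL ▸ mem_image_of_mem L hi)]
    simp

namespace FreeGroup

variable {α : Type*}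

def splitPair (t : ℕ) (gz : List (α × Bool) × List (α × Bool)) : FreeGroup α × FreeGroup α :=
  (mk (gz.1.take t) * mk gz.2, (mk (gz.1.drop t))⁻¹ * mk gz.2)

theorem splitPair_mul_inv (t : ℕ) (gz : List (α × Bool) × List (α × Bool)) :
    (splitPair t gz).1 * (splitPair t gz).2⁻¹ = mk gz.1 := by
  simp only [splitPair, mul_inv_rev, inv_inv, mul_assoc, mul_inv_cancel_left]
  rw [mul_mk, List.take_append_drop]

variable [DecidableEq α]

theorem IsReduced.toWord_mk {w : List (α × Bool)} (h : IsReduced w) : (mk w).toWord = w :=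
  FreeGroup.toWord_mk.trans h.reduce_eq

theorem exists_reduce_append_eq {u v : List (α × Bool)} (hu : IsReduced u)
    (hv : IsReduced v) :
    ∃ u₁ c v₁, u = u₁ ++ c ∧ v = invRev c ++ v₁ ∧ reduce (u ++ v) = u₁ ++ v₁ := by
  induction u using List.reverseRecOn generalizing v with
  | nil => exact ⟨[], [], v, rfl, rfl, hv.reduce_eq⟩
  | append_singleton u a ih =>
    rcases v with _ | ⟨b, v⟩
    · exact ⟨u ++ [a], [], [], by simp, rfl, by simpa using hu.reduce_eq⟩
    by_cases hab : a.1 = b.1 → a.2 = b.2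
    · refine ⟨u ++ [a], [], b :: v, by simp, rfl, IsReduced.reduce_eq ?_⟩
      exact List.isChain_append.2 ⟨hu, hv, by simpa using hab⟩
    obtain ⟨x, s⟩ := a
    obtain ⟨y, t⟩ := b
    simp only [Classical.not_imp] at hab
    obtain ⟨rfl, hst⟩ := hab
    obtain rfl : t = !s := by cases s <;> cases t <;> simp_all
    obtain ⟨u₁, c, v₁, rfl, rfl, hred⟩ :=
      ih (hu.infix (List.prefix_append _ _).isInfix) (hv.infix (List.suffix_cons _ _).isInfix)
    refine ⟨u₁, c ++ [(x, s)], v₁, by simp, by simp [invRev], ?_⟩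
    rw [← hred, List.append_assoc, List.singleton_append]
    exact reduce.Step.eq (by simpa using Red.Step.not (L₁ := u₁ ++ c))

theorem exists_toWord_mul_inv_eq (x e : FreeGroup α) :
    ∃ U W T, x.toWord = U ++ T ∧ e.toWord = W ++ T ∧ (x * e⁻¹).toWord = U ++ invRev W := by
  obtain ⟨U, c, V, hx, he, hred⟩ :=
    exists_reduce_append_eq (isReduced_toWord (x := x)) (isReduced_toWord (x := e⁻¹))
  refine ⟨U, invRev V, c, hx, ?_, by rw [toWord_mul, hred, invRev_invRev]⟩
  rw [← invRev_invRev (L₁ := e.toWord), ← toWord_inv, he, invRev_append, invRev_invRev]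

theorem norm_mul_inv_comm (x e : FreeGroup α) : norm (e * x⁻¹) = norm (x * e⁻¹) := by
  rw [← norm_inv_eq, mul_inv_rev, inv_inv]

def pairsAt (E F : Finset (FreeGroup α)) (n : ℕ) : Finset (FreeGroup α × FreeGroup α) :=
  (F ×ˢ E).filter fun p => norm (p.1 * p.2⁻¹) = n

/-- The pairs `(x, e)` with `x = u t`, `e = w t` and `x e⁻¹ = u w⁻¹` as reduced words, where
`|u| = k` and `|w| = ℓ`. -/
def pairsAtSplit (E F : Finset (FreeGroup α)) (k ℓ : ℕ) : Finset (FreeGroup α × FreeGroup α) :=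
  (F ×ˢ E).filter fun p => norm (p.1 * p.2⁻¹) = k + ℓ ∧ norm p.1 + ℓ = norm p.2 + k

theorem tsum_conv_radial (ψ : ℕ → ℝ≥0∞) (E F : Finset (FreeGroup α)) :
    ∑' x, conv (fun y => ψ (norm y)) (finInd E) x * finInd F x =
      ∑' n, ψ n * #(pairsAt E F n) :=
  (tsum_conv_finInd_mul_finInd _ E F).trans (sum_comp_eq_tsum_mul_card_filter _ _ ψ)

theorem take_append_drop_toWord_eq {x e : FreeGroup α} {k ℓ : ℕ}
    (hn : norm (x * e⁻¹) = k + ℓ) (h : norm x + ℓ = norm e + k) :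
    ℓ ≤ norm e ∧ e.toWord.take ℓ ++ x.toWord.drop k = e.toWord := by
  obtain ⟨U, W, T, hx, he, hxe⟩ := exists_toWord_mul_inv_eq x e
  simp only [norm, hx, he, hxe, List.length_append, invRev_length] at hn h ⊢
  have hU : U.length = k := by omega
  have hW : W.length = ℓ := by omega
  exact ⟨by omega, by rw [List.take_left' hW, List.drop_left' hU]⟩

theorem pairsAt_subset_biUnion_pairsAtSplit (E F : Finset (FreeGroup α)) (n : ℕ) :
    pairsAt E F n ⊆ (antidiagonal n).biUnion fun p => pairsAtSplit E F p.1 p.2 := by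
  intro p hp
  obtain ⟨hmem, hn⟩ := mem_filter.1 hp
  obtain ⟨U, W, T, hx, he, hxe⟩ := exists_toWord_mul_inv_eq p.1 p.2
  have hlen : norm (p.1 * p.2⁻¹) = U.length + W.length := by
    rw [norm, hxe, List.length_append, invRev_length]
  refine mem_biUnion.2 ⟨(U.length, W.length), mem_antidiagonal.2 (hn ▸ hlen).symm,
    mem_filter.2 ⟨hmem, hlen, ?_⟩⟩
  simp only [norm, hx, he, List.length_append]
  omega

theorem card_pairsAtSplit_comm (E F : Finset (FreeGroup α)) (k ℓ : ℕ) :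
    #(pairsAtSplit F E ℓ k) = #(pairsAtSplit E F k ℓ) := by
  refine card_nbij' Prod.swap Prod.swap (fun p hp => ?_) (fun p hp => ?_) (fun _ _ => rfl)
    (fun _ _ => rfl) <;>
  · simp only [pairsAtSplit, coe_filter, mem_product, Set.mem_ofPred_eq, Prod.fst_swap,
      Prod.snd_swap] at hp ⊢
    rw [norm_mul_inv_comm]
    exact ⟨hp.1.symm, by omega, by omega⟩

theorem splitPair_injOn (t : ℕ) :
    Set.InjOn (splitPair (α := α) t) {gz | IsReduced gz.1 ∧ IsReduced gz.2} := by
  rintro ⟨g, z⟩ ⟨hg, hz⟩ ⟨g', z'⟩ ⟨hg', hz'⟩ h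
  dsimp only at hg hz hg' hz'
  have hgg' : mk g = mk g' := by
    rw [← splitPair_mul_inv t (g, z), ← splitPair_mul_inv t (g', z'), h]
  obtain rfl : g = g' := by rw [← hg.toWord_mk, ← hg'.toWord_mk, hgg']
  have hzz' : mk z = mk z' := mul_left_cancel (congrArg Prod.fst h)
  rw [← hz.toWord_mk, ← hz'.toWord_mk, hzz']

section Fintype

variable [Fintype α]

def reducedWords : ℕ → Finset (α × Bool) → Finset (List (α × Bool))
  | 0, _ => {[]}
  | t + 1, A => A.biUnion fun a =>
      (reducedWords t (univ.filter fun b => a.1 = b.1 → a.2 = b.2)).image (a :: ·)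

theorem mem_reducedWords {t : ℕ} {A : Finset (α × Bool)} {w : List (α × Bool)} :
    w ∈ reducedWords t A ↔ IsReduced w ∧ w.length = t ∧ ∀ a ∈ w.head?, a ∈ A := by
  induction t generalizing A w with
  | zero =>
    simp only [reducedWords, mem_singleton]
    exact ⟨by rintro rfl; simp, fun h => List.length_eq_zero_iff.1 h.2.1⟩
  | succ t ih =>
    rcases w with _ | ⟨a, w⟩
    · simp [reducedWords]
    simp only [reducedWords, mem_biUnion, mem_image, List.cons.injEq, ih, mem_filter, mem_univ,
      true_and, IsReduced, List.isChain_cons, List.length_cons, List.head?_cons,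
      Option.mem_def, Option.some.injEq, forall_eq', add_left_inj]
    constructor
    · rintro ⟨b, hb, w', ⟨hred, rfl, hhead⟩, rfl, rfl⟩
      exact ⟨⟨hhead, hred⟩, rfl, hb⟩
    · rintro ⟨⟨hhead, hred⟩, rfl, ha⟩
      exact ⟨a, ha, w, ⟨hred, rfl, hhead⟩, rfl, rfl⟩

theorem filter_compatible_eq_erase (a : α × Bool) :
    (univ.filter fun b : α × Bool => a.1 = b.1 → a.2 = b.2) = univ.erase (a.1, !a.2) := by
  ext ⟨x, s⟩
  obtain ⟨y, u⟩ := a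
  simp only [mem_filter, mem_univ, true_and, mem_erase, ne_eq, Prod.mk.injEq]
  cases u <;> cases s <;> simp [eq_comm]

theorem card_reducedWords_succ (t : ℕ) (A : Finset (α × Bool)) :
    #(reducedWords (t + 1) A) = #A * (2 * Fintype.card α - 1) ^ t := by
  have hcons (B : Finset (α × Bool)) (W : α × Bool → Finset (List (α × Bool))) :
      #(B.biUnion fun a => (W a).image (a :: ·)) = ∑ a ∈ B, #(W a) := by
    rw [card_biUnion fun a _ b _ hab => disjoint_left.2 (by
      simp only [mem_image]; rintro _ ⟨_, _, rfl⟩ ⟨_, _, h⟩; exact hab (List.cons.inj h).1.symm)]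
    exact sum_congr rfl fun a _ => card_image_of_injective _ List.cons_injective
  have hcard (a : α × Bool) :
      #(univ.filter fun b : α × Bool => a.1 = b.1 → a.2 = b.2) = 2 * Fintype.card α - 1 := by
    rw [filter_compatible_eq_erase, card_erase_of_mem (mem_univ _), card_univ,
      Fintype.card_prod, Fintype.card_bool, mul_comm]
  induction t generalizing A with
  | zero => rw [reducedWords, hcons]; simp [reducedWords]
  | succ t ih =>
    rw [reducedWords, hcons, sum_congr rfl fun a _ => by rw [ih, hcard], sum_const,
      smul_eq_mul, pow_succ']

theorem pow_le_card_reducedWords {q : ℕ} (hq : q + 1 = 2 * Fintype.card α) (t : ℕ) :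
    q ^ t ≤ #(reducedWords t (univ : Finset (α × Bool))) := by
  cases t with
  | zero => simp [reducedWords]
  | succ t =>
    rw [card_reducedWords_succ, card_univ, Fintype.card_prod, Fintype.card_bool, pow_succ']
    exact Nat.mul_le_mul (by omega) (by rw [show 2 * Fintype.card α - 1 = q by omega])

theorem card_reducedWords_le {q : ℕ} (hq : q + 1 = 2 * Fintype.card α) (t : ℕ) :
    #(reducedWords t (univ : Finset (α × Bool))) ≤ 2 * q ^ t := by
  cases t with
  | zero => simp [reducedWords]
  | succ t =>
    rw [card_reducedWords_succ, card_univ, Fintype.card_prod, Fintype.card_bool, pow_succ',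
      ← mul_assoc, show 2 * Fintype.card α - 1 = q by omega]
    exact Nat.mul_le_mul_right _ (by omega)

theorem card_pairsAtSplit_le {q : ℕ} (hq : q + 1 = 2 * Fintype.card α)
    (E F : Finset (FreeGroup α)) (k ℓ : ℕ) : #(pairsAtSplit E F k ℓ) ≤ 2 * #F * q ^ ℓ := by
  calc #(pairsAtSplit E F k ℓ) ≤ #(F ×ˢ reducedWords ℓ (univ : Finset (α × Bool))) := by
        refine card_le_card_of_injOn (fun p => (p.1, p.2.toWord.take ℓ)) (fun p hp => ?_) ?_
        · obtain ⟨hmem, hn, h⟩ := mem_filter.1 hp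
          refine mem_product.2 ⟨(mem_product.1 hmem).1, mem_reducedWords.2 ⟨?_, ?_, by simp⟩⟩
          · exact isReduced_toWord.infix (List.take_prefix _ _).isInfix
          · simpa [norm] using (take_append_drop_toWord_eq hn h).1
        · intro p hp p' hp' hpp'
          obtain ⟨-, hn, h⟩ := mem_filter.1 hp
          obtain ⟨-, hn', h'⟩ := mem_filter.1 hp'
          simp only [Prod.mk.injEq] at hpp'
          refine Prod.ext hpp'.1 (toWord_injective ?_)
          rw [← (take_append_drop_toWord_eq hn h).2, ← (take_append_drop_toWord_eq hn' h').2,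
            hpp'.1, hpp'.2]
    _ ≤ #F * (2 * q ^ ℓ) := by rw [card_product]; gcongr; exact card_reducedWords_le hq ℓ
    _ = 2 * #F * q ^ ℓ := by ring

theorem card_pairsAt_le {q : ℕ} (hq : q + 1 = 2 * Fintype.card α) (hq2 : 2 ≤ q)
    (E F : Finset (FreeGroup α)) (n : ℕ) :
    (#(pairsAt E F n) : ℝ≥0∞) ≤
      8 * (#E : ℝ≥0∞) ^ (1 / 2 : ℝ) * (#F : ℝ≥0∞) ^ (1 / 2 : ℝ) *
        (q : ℝ≥0∞) ^ ((n : ℝ) / 2) := by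
  have hsplit : #(pairsAt E F n) ≤ ∑ p ∈ antidiagonal n, #(pairsAtSplit E F p.1 p.2) :=
    (card_le_card (pairsAt_subset_biUnion_pairsAtSplit E F n)).trans card_biUnion_le
  have h2 : ((2 : ℝ≥0∞) ^ 2) ^ (1 / 2 : ℝ) = 2 := by
    rw [one_div]; exact_mod_cast ENNReal.pow_rpow_inv_natCast two_ne_zero 2
  calc (#(pairsAt E F n) : ℝ≥0∞)
      ≤ ∑ p ∈ antidiagonal n, (#(pairsAtSplit E F p.1 p.2) : ℝ≥0∞) := by exact_mod_cast hsplit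
    _ ≤ 4 * (2 * #E * (2 * #F) * (q : ℝ≥0∞) ^ n) ^ (1 / 2 : ℝ) := by
        refine ENNReal.sum_antidiagonal_le_four_mul_rpow_half (by exact_mod_cast hq2)
          (fun p _ => ?_) (fun p _ => ?_)
        · rw [← card_pairsAtSplit_comm]; exact_mod_cast card_pairsAtSplit_le hq F E p.2 p.1
        · exact_mod_cast card_pairsAtSplit_le hq E F p.1 p.2
    _ = 8 * (#E : ℝ≥0∞) ^ (1 / 2 : ℝ) * (#F : ℝ≥0∞) ^ (1 / 2 : ℝ) *
          (q : ℝ≥0∞) ^ ((n : ℝ) / 2) := by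
        rw [show 2 * (#E : ℝ≥0∞) * (2 * #F) * (q : ℝ≥0∞) ^ n =
          2 ^ 2 * #E * #F * (q : ℝ≥0∞) ^ n by ring]
        simp only [ENNReal.mul_rpow_of_nonneg _ _ (by norm_num : (0 : ℝ) ≤ 1 / 2), h2,
          ← ENNReal.rpow_natCast_mul, mul_one_div]
        ring

def ball (m : ℕ) : Finset (FreeGroup α) :=
  ((range (m + 1)).biUnion fun k => reducedWords k univ).image mk

theorem mem_ball_of_norm_le {m : ℕ} {x : FreeGroup α} (h : norm x ≤ m) : x ∈ ball m :=
  mem_image.2 ⟨x.toWord, mem_biUnion.2 ⟨norm x, mem_range.2 (Nat.lt_succ_of_le h),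
    mem_reducedWords.2 ⟨isReduced_toWord, rfl, by simp⟩⟩, mk_toWord⟩

theorem card_ball_le {q : ℕ} (hq : q + 1 = 2 * Fintype.card α) (hq2 : 2 ≤ q) (m : ℕ) :
    #(ball m : Finset (FreeGroup α)) ≤ 4 * q ^ m :=
  calc #(ball m : Finset (FreeGroup α))
      ≤ ∑ k ∈ range (m + 1), #(reducedWords k (univ : Finset (α × Bool))) :=
        card_image_le.trans card_biUnion_le
    _ ≤ ∑ k ∈ range (m + 1), 2 * q ^ k := sum_le_sum fun k _ => card_reducedWords_le hq k
    _ ≤ 2 * (2 * q ^ m) := by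
        rw [← mul_sum]; gcongr; exact sum_range_succ_pow_le_two_mul_pow hq2 m
    _ = 4 * q ^ m := by ring

theorem splitPair_mem_pairsAt_ball {m n : ℕ} (hn : n ≤ m) {gz : List (α × Bool) × List (α × Bool)}
    (hg : IsReduced gz.1) (hgn : gz.1.length = n) (hz : gz.2.length = m - (n - n / 2)) :
    splitPair (n / 2) gz ∈ pairsAt (ball m) (ball m) n := by
  refine mem_filter.2 ⟨mem_product.2 ⟨mem_ball_of_norm_le ?_, mem_ball_of_norm_le ?_⟩, ?_⟩
  · refine (norm_mul_le _ _).trans ((add_le_add norm_mk_le norm_mk_le).trans ?_)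
    simp only [List.length_take]; omega
  · refine (norm_mul_le _ _).trans ?_
    rw [norm_inv_eq]
    refine (add_le_add norm_mk_le norm_mk_le).trans ?_
    simp only [List.length_drop]; omega
  · rw [splitPair_mul_inv, norm, hg.toWord_mk, hgn]

theorem pow_le_card_pairsAt_ball {q : ℕ} (hq : q + 1 = 2 * Fintype.card α) {m n : ℕ}
    (hn : n ≤ m) : q ^ (m + n / 2) ≤ #(pairsAt (ball m : Finset (FreeGroup α)) (ball m) n) :=
  calc q ^ (m + n / 2) = q ^ n * q ^ (m - (n - n / 2)) := by rw [← pow_add]; congr 1; omega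
    _ ≤ #(reducedWords n univ ×ˢ reducedWords (m - (n - n / 2)) univ) := by
        rw [card_product]
        exact Nat.mul_le_mul (pow_le_card_reducedWords hq n) (pow_le_card_reducedWords hq _)
    _ ≤ #(pairsAt (ball m : Finset (FreeGroup α)) (ball m) n) := by
        refine card_le_card_of_injOn (splitPair (n / 2)) (fun gz hgz => ?_)
          ((splitPair_injOn _).mono fun gz hgz => ?_) <;>
        obtain ⟨⟨hg, hgn, -⟩, ⟨hz, hzk, -⟩⟩ :=
          And.imp mem_reducedWords.1 mem_reducedWords.1 (mem_product.1 hgz)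
        · exact splitPair_mem_pairsAt_ball hn hg hgn hzk
        · exact ⟨hg, hz⟩

theorem tsum_mul_rpow_le_of_forall_tsum_mul_card_pairsAt_le {q : ℕ}
    (hq : q + 1 = 2 * Fintype.card α) (hq2 : 2 ≤ q) (ψ : ℕ → ℝ≥0∞) (C : ℝ≥0∞)
    (h : ∀ E F : Finset (FreeGroup α), ∑' n, ψ n * #(pairsAt E F n) ≤
      C * (#E : ℝ≥0∞) ^ (1 / 2 : ℝ) * (#F : ℝ≥0∞) ^ (1 / 2 : ℝ)) :
    ∑' n, ψ n * (q : ℝ≥0∞) ^ ((n : ℝ) / 2) ≤ 4 * q * C := by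
  refine ENNReal.tsum_le_of_sum_range_le fun m => ?_
  set B : Finset (FreeGroup α) := ball m
  have hB : ∑' n, ψ n * #(pairsAt B B n) ≤ C * (4 * (q : ℝ≥0∞) ^ m) :=
    calc ∑' n, ψ n * #(pairsAt B B n)
        ≤ C * (#B : ℝ≥0∞) ^ (1 / 2 : ℝ) * (#B : ℝ≥0∞) ^ (1 / 2 : ℝ) := h B B
      _ = C * #B := by
          rw [mul_assoc, ← ENNReal.rpow_add_of_nonneg _ _ (by norm_num) (by norm_num)]; norm_num
      _ ≤ C * (4 * (q : ℝ≥0∞) ^ m) := by gcongr; exact_mod_cast card_ball_le hq hq2 m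
  have hterm (n : ℕ) (hn : n ∈ range m) :
      ψ n * (q : ℝ≥0∞) ^ ((n : ℝ) / 2) * (q : ℝ≥0∞) ^ m ≤ q * (ψ n * #(pairsAt B B n)) :=
    calc ψ n * (q : ℝ≥0∞) ^ ((n : ℝ) / 2) * (q : ℝ≥0∞) ^ m
        ≤ ψ n * (q * (q : ℝ≥0∞) ^ (n / 2)) * (q : ℝ≥0∞) ^ m := by
          gcongr; exact ENNReal.rpow_natCast_div_two_le (by exact_mod_cast (by omega : 1 ≤ q)) n
      _ = q * (ψ n * (q : ℝ≥0∞) ^ (m + n / 2)) := by ring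
      _ ≤ q * (ψ n * #(pairsAt B B n)) := by
          gcongr; exact_mod_cast pow_le_card_pairsAt_ball hq (mem_range.1 hn).le
  have hq0 : (q : ℝ≥0∞) ^ m ≠ 0 := pow_ne_zero _ (by exact_mod_cast (by omega : q ≠ 0))
  refine (ENNReal.mul_le_mul_iff_left hq0 (ENNReal.pow_ne_top (ENNReal.natCast_ne_top q))).1 ?_
  calc (∑ n ∈ range m, ψ n * (q : ℝ≥0∞) ^ ((n : ℝ) / 2)) * (q : ℝ≥0∞) ^ m
      ≤ ∑ n ∈ range m, q * (ψ n * #(pairsAt B B n)) := by rw [sum_mul]; exact sum_le_sum hterm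
    _ ≤ q * ∑' n, ψ n * #(pairsAt B B n) := by
        rw [← mul_sum]; gcongr; exact ENNReal.sum_le_tsum _
    _ ≤ q * (C * (4 * (q : ℝ≥0∞) ^ m)) := by gcongr
    _ = 4 * q * C * (q : ℝ≥0∞) ^ m := by ring

theorem tsum_mul_card_pairsAt_le {q : ℕ} (hq : q + 1 = 2 * Fintype.card α) (hq2 : 2 ≤ q)
    (ψ : ℕ → ℝ≥0∞) (E F : Finset (FreeGroup α)) :
    ∑' n, ψ n * #(pairsAt E F n) ≤ 8 * (∑' n, ψ n * (q : ℝ≥0∞) ^ ((n : ℝ) / 2)) *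
      (#E : ℝ≥0∞) ^ (1 / 2 : ℝ) * (#F : ℝ≥0∞) ^ (1 / 2 : ℝ) :=
  calc ∑' n, ψ n * #(pairsAt E F n)
      ≤ ∑' n, 8 * (#E : ℝ≥0∞) ^ (1 / 2 : ℝ) * (#F : ℝ≥0∞) ^ (1 / 2 : ℝ) *
          (ψ n * (q : ℝ≥0∞) ^ ((n : ℝ) / 2)) := ENNReal.tsum_le_tsum fun n => by
        rw [mul_left_comm]; gcongr; exact card_pairsAt_le hq hq2 E F n
    _ = _ := by rw [ENNReal.tsum_mul_left]; ring

end Fintype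

end FreeGroup

theorem radial_restricted_weak_type_two_two_iff_general
    (r : ℕ) (hr : 2 ≤ r) (q : ℕ) (hq : q = 2 * r - 1)
    (a : ℕ → ℝ) :
    (∃ C : ℝ, ∀ E F' : Finset (FreeGroup (Fin r)),
        ∑' x : FreeGroup (Fin r),
            conv (fun y => ENNReal.ofReal (a (wlen y))) (finInd E) x * finInd F' x
          ≤ ENNReal.ofReal C * (E.card : ℝ≥0∞) ^ ((1 : ℝ) / 2) *
              (F'.card : ℝ≥0∞) ^ ((1 : ℝ) / 2))
      ↔ (∑' n : ℕ, ENNReal.ofReal (a n) * (q : ℝ≥0∞) ^ ((n : ℝ) / 2)) ≠ ∞ := by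
  have hq' : q + 1 = 2 * Fintype.card (Fin r) := by rw [Fintype.card_fin]; omega
  have hq2 : 2 ≤ q := by omega
  simp only [show @wlen (Fin r) _ = FreeGroup.norm from rfl,
    FreeGroup.tsum_conv_radial (fun n => ENNReal.ofReal (a n))]
  constructor
  · rintro ⟨C, hC⟩
    refine ne_top_of_le_ne_top ?_
      (FreeGroup.tsum_mul_rpow_le_of_forall_tsum_mul_card_pairsAt_le hq' hq2 _ _ hC)
    exact ENNReal.mul_ne_top (ENNReal.mul_ne_top (by simp) (ENNReal.natCast_ne_top q))
      ENNReal.ofReal_ne_top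
  · intro hS
    refine ⟨(8 * ∑' n, ENNReal.ofReal (a n) * (q : ℝ≥0∞) ^ ((n : ℝ) / 2)).toReal, fun E F => ?_⟩
    rw [ENNReal.ofReal_toReal (ENNReal.mul_ne_top (by simp) hS)]
    exact FreeGroup.tsum_mul_card_pairsAt_le hq' hq2 _ E F

/-- The radial convolution operator `λ(f)` with nonnegative coefficients `f_n` is of
restricted weak type `(2,2)`, i.e. `⟨f ∗ χ_E, χ_{F'}⟩ ≤ C |E|^{1/2} |F'|^{1/2}` for all
finite `E, F'`, if and only if `Σ_n f_n q^{n/2} < ∞` (i.e. `f ∈ L^{(2,1)}`). -/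
theorem radial_restricted_weak_type_two_two_iff
    (r : ℕ) (hr : 2 ≤ r) (q : ℕ) (hq : q = 2 * r - 1)
    (a : ℕ → ℝ) (ha : ∀ n, 0 ≤ a n) :
    (∃ C : ℝ, ∀ E F' : Finset (FreeGroup (Fin r)),
        ∑' x : FreeGroup (Fin r),
            conv (fun y => ENNReal.ofReal (a (wlen y))) (finInd E) x * finInd F' x
          ≤ ENNReal.ofReal C * (E.card : ℝ≥0∞) ^ ((1 : ℝ) / 2) *
              (F'.card : ℝ≥0∞) ^ ((1 : ℝ) / 2))
      ↔ (∑' n : ℕ, ENNReal.ofReal (a n) * (q : ℝ≥0∞) ^ ((n : ℝ) / 2)) ≠ ∞ :=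
  radial_restricted_weak_type_two_two_iff_general r hr q hq a
end
end

section
/- Let 1 < p < 2 and p′ = p/(p−1). For every radial function f = Σ_{n=0}^∞ f_n χ_n on the free group F with f_n ≥ 0 and for every n ∈ ℕ, one has Σ_{x∈F} ((f∗χ_n)(x))^{p′} ≥ q^n · Σ_{m=0}^{n} q^{m p′/p} f_m^{p′} (both sides understood as sums in [0,∞]). -/
open scoped ENNReal

noncomputable section

/-- Indicator (ℝ≥0∞-valued) of the sphere of radius `n` in the free group. -/
def sphInd {α : Type*} [DecidableEq α] (n : ℕ) (x : FreeGroup α) : ℝ≥0∞ :=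
  if wlen x = n then 1 else 0

/-!
If `|x| = n - m`, the `q ^ m` elements `y` of length `m` whose reduced word does not begin with
the first letter of `x` give no cancellation in `y⁻¹ x`, so `|y⁻¹ x| = n` and
`(f ∗ χ_n)(x) ≥ q ^ m f_m`. Raising this to the power `p'` and summing over at least `q ^ (n - m)`
such `x`, for `m = 0, …, n`, gives `q ^ n Σ_m q ^ (m (p' - 1)) f_m ^ p'`, and `p' - 1 = p' / p`.
-/

namespace FreeGroup

variable {α : Type*}

theorem IsReduced.invRev [DecidableEq α] {L : List (α × Bool)} (h : IsReduced L) :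
    IsReduced (FreeGroup.invRev L) := by
  rw [isReduced_iff_reduce_eq] at h ⊢
  rw [reduce_invRev, h]

theorem IsReduced.invRev_append [DecidableEq α] {w v : List (α × Bool)} (hw : IsReduced w)
    (hv : IsReduced v) (hwv : ∀ l ∈ w.head?, ∀ l' ∈ v.head?, l ≠ l') :
    IsReduced (FreeGroup.invRev w ++ v) := by
  refine List.isChain_append.2 ⟨hw.invRev, hv, fun x hx y hy h1 => ?_⟩
  have hlast : (FreeGroup.invRev w).getLast? = w.head?.map fun l => (l.1, !l.2) := by
    simp [FreeGroup.invRev]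
  obtain ⟨l, hl, rfl⟩ := Option.mem_map.1 (hlast ▸ hx)
  by_contra h2
  exact hwv l hl y hy (Prod.ext h1 (by simpa using h2))

variable [DecidableEq α] [Fintype α]

def reducedWordsAvoiding : ℕ → α × Bool → Finset (List (α × Bool))
  | 0, _ => {[]}
  | m + 1, b => (Finset.univ.filter (· ≠ b)).biUnion fun c =>
      (reducedWordsAvoiding m (c.1, !c.2)).image (c :: ·)

theorem mem_reducedWordsAvoiding {m : ℕ} {b : α × Bool} {w : List (α × Bool)} :
    w ∈ reducedWordsAvoiding m b ↔ w.length = m ∧ IsReduced w ∧ ∀ l ∈ w.head?, l ≠ b := by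
  induction m generalizing b w with
  | zero =>
    simp only [reducedWordsAvoiding, Finset.mem_singleton, List.length_eq_zero_iff]
    constructor
    · rintro rfl
      exact ⟨rfl, .nil, by simp⟩
    · exact fun h => h.1
  | succ m ih =>
    cases w with
    | nil => simp [reducedWordsAvoiding]
    | cons c w =>
      have hstep : ∀ l : α × Bool, (c.1 = l.1 → c.2 = l.2) ↔ l ≠ (c.1, !c.2) := by
        rintro ⟨l₁, l₂⟩
        cases c.2 <;> cases l₂ <;> simp [eq_comm]
      have hcons : c :: w ∈ reducedWordsAvoiding (m + 1) b ↔
          c ≠ b ∧ w ∈ reducedWordsAvoiding m (c.1, !c.2) := by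
        simp [reducedWordsAvoiding]
      rw [hcons, ih]
      simp only [IsReduced, List.isChain_cons, List.length_cons, Nat.add_right_cancel_iff,
        List.head?_cons, Option.mem_def, Option.some.injEq, forall_eq', hstep]
      tauto

theorem card_reducedWordsAvoiding (m : ℕ) (b : α × Bool) :
    (reducedWordsAvoiding m b).card = (2 * Fintype.card α - 1) ^ m := by
  induction m generalizing b with
  | zero => simp [reducedWordsAvoiding]
  | succ m ih =>
    have hletters : (Finset.univ.filter (· ≠ b)).card = 2 * Fintype.card α - 1 := by
      rw [Finset.filter_ne', Finset.card_erase_of_mem (Finset.mem_univ _), Finset.card_univ,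
        Fintype.card_prod, Fintype.card_bool, mul_comm]
    rw [reducedWordsAvoiding, Finset.card_biUnion]
    · simp only [Finset.card_image_of_injective _ List.cons_injective, ih, Finset.sum_const,
        hletters, smul_eq_mul, pow_succ']
    · intro c _ c' _ hne
      simp only [Function.onFun, Finset.disjoint_left, Finset.mem_image]
      rintro _ ⟨u, -, rfl⟩ ⟨u', -, h⟩
      exact hne (List.cons_eq_cons.1 h).1.symm

end FreeGroup

open FreeGroup

section Sphere

variable {α : Type*} [DecidableEq α]

theorem wlen_inv_mul {x y : FreeGroup α}
    (hxy : ∀ l ∈ y.toWord.head?, ∀ l' ∈ x.toWord.head?, l ≠ l') :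
    wlen (y⁻¹ * x) = wlen y + wlen x := by
  rw [wlen, toWord_mul, toWord_inv,
    (isReduced_toWord.invRev_append isReduced_toWord hxy).reduce_eq, List.length_append,
    invRev_length, wlen, wlen]

variable [Fintype α]

def sphereAvoiding (m : ℕ) (b : α × Bool) : Finset (FreeGroup α) :=
  (reducedWordsAvoiding m b).image mk

theorem mem_sphereAvoiding {m : ℕ} {b : α × Bool} {y : FreeGroup α} :
    y ∈ sphereAvoiding m b ↔ wlen y = m ∧ ∀ l ∈ y.toWord.head?, l ≠ b := by
  simp only [sphereAvoiding, Finset.mem_image, mem_reducedWordsAvoiding]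
  constructor
  · rintro ⟨w, ⟨hlen, hw, hb⟩, rfl⟩
    rw [wlen, toWord_mk, hw.reduce_eq]
    exact ⟨hlen, hb⟩
  · rintro ⟨hlen, hb⟩
    exact ⟨y.toWord, ⟨hlen, isReduced_toWord, hb⟩, mk_toWord⟩

theorem card_sphereAvoiding (m : ℕ) (b : α × Bool) :
    (sphereAvoiding m b).card = (2 * Fintype.card α - 1) ^ m := by
  rw [sphereAvoiding, Finset.card_image_of_injOn, card_reducedWordsAvoiding]
  intro w hw w' hw' h
  rw [← (mem_reducedWordsAvoiding.1 hw).2.1.reduce_eq,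
    ← (mem_reducedWordsAvoiding.1 hw').2.1.reduce_eq, ← toWord_mk, ← toWord_mk, h]

variable [Nonempty α]

theorem pow_mul_le_conv_sphInd (g : ℕ → ℝ≥0∞) {m n : ℕ} (x : FreeGroup α)
    (hx : wlen x + m = n) :
    ((2 * Fintype.card α - 1 : ℕ) : ℝ≥0∞) ^ m * g m ≤
      conv (fun y => g (wlen y)) (sphInd n) x := by
  set b : α × Bool := x.toWord.head?.getD (Classical.arbitrary _)
  have hterm : ∀ y ∈ sphereAvoiding m b, g (wlen y) * sphInd n (y⁻¹ * x) = g m := by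
    intro y hy
    obtain ⟨hlen, hb⟩ := mem_sphereAvoiding.1 hy
    have hyx : ∀ l ∈ y.toWord.head?, ∀ l' ∈ x.toWord.head?, l ≠ l' := by
      intro l hl l' hl'
      simpa [b, Option.mem_def.1 hl'] using hb l hl
    rw [hlen, sphInd, if_pos (by rw [wlen_inv_mul hyx]; omega), mul_one]
  calc ((2 * Fintype.card α - 1 : ℕ) : ℝ≥0∞) ^ m * g m
      = ∑ y ∈ sphereAvoiding m b, g (wlen y) * sphInd n (y⁻¹ * x) := by
        rw [Finset.sum_congr rfl hterm, Finset.sum_const, card_sphereAvoiding, nsmul_eq_mul,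
          Nat.cast_pow]
    _ ≤ conv (fun y => g (wlen y)) (sphInd n) x := ENNReal.sum_le_tsum _

theorem sum_pow_mul_le_tsum (F : FreeGroup α → ℝ≥0∞) (L : ℕ → ℝ≥0∞) (s : Finset ℕ)
    (hF : ∀ x, wlen x ∈ s → L (wlen x) ≤ F x) :
    ∑ k ∈ s, ((2 * Fintype.card α - 1 : ℕ) : ℝ≥0∞) ^ k * L k ≤ ∑' x, F x := by
  set b : α × Bool := Classical.arbitrary _
  have hdisj : (s : Set ℕ).PairwiseDisjoint fun k => sphereAvoiding k b := by
    intro k _ k' _ hne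
    simp only [Function.onFun, Finset.disjoint_left, mem_sphereAvoiding]
    rintro x ⟨rfl, -⟩ ⟨rfl, -⟩
    exact hne rfl
  calc ∑ k ∈ s, ((2 * Fintype.card α - 1 : ℕ) : ℝ≥0∞) ^ k * L k
      = ∑ k ∈ s, ∑ x ∈ sphereAvoiding k b, L (wlen x) := by
        refine Finset.sum_congr rfl fun k _ => ?_
        rw [Finset.sum_congr rfl fun x hx => congrArg L (mem_sphereAvoiding.1 hx).1,
          Finset.sum_const, card_sphereAvoiding, nsmul_eq_mul, Nat.cast_pow]
    _ ≤ ∑ k ∈ s, ∑ x ∈ sphereAvoiding k b, F x := by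
        refine Finset.sum_le_sum fun k _ => Finset.sum_le_sum fun x hx => hF x ?_
        rwa [(mem_sphereAvoiding.1 hx).1]
    _ = ∑ x ∈ s.biUnion fun k => sphereAvoiding k b, F x := (Finset.sum_biUnion hdisj).symm
    _ ≤ ∑' x, F x := ENNReal.sum_le_tsum _

end Sphere

theorem ENNReal.pow_mul_rpow_eq_pow_sub_mul_rpow {Q : ℝ≥0∞} (hQ0 : Q ≠ 0) (hQ : Q ≠ ⊤)
    {p p' : ℝ} (hpp' : p.HolderConjugate p') {m n : ℕ} (hmn : m ≤ n) (A : ℝ≥0∞) :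
    Q ^ n * (Q ^ ((m : ℝ) * p' / p) * A ^ p') = Q ^ (n - m) * (Q ^ m * A) ^ p' := by
  have hexp : (n : ℝ) + m * p' / p = (n - m : ℕ) + m * p' := by
    rw [mul_div_assoc, hpp'.symm.div_conj_eq_sub_one, Nat.cast_sub hmn]
    ring
  rw [ENNReal.mul_rpow_of_nonneg _ _ hpp'.symm.nonneg, ← mul_assoc, ← mul_assoc,
    ← ENNReal.rpow_natCast, ← ENNReal.rpow_natCast, ← ENNReal.rpow_natCast, ← ENNReal.rpow_mul,
    ← ENNReal.rpow_add _ _ hQ0 hQ, ← ENNReal.rpow_add _ _ hQ0 hQ, hexp]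

theorem radial_conv_sphere_lower_lp_general
    (r : ℕ) (hr : 2 ≤ r) (q : ℕ) (hq : q = 2 * r - 1)
    (p : ℝ) (hp1 : 1 < p) (p' : ℝ) (hp' : p' = p / (p - 1))
    (a : ℕ → ℝ) (n : ℕ) :
    (q : ℝ≥0∞) ^ n *
        ∑ m ∈ Finset.range (n + 1),
          (q : ℝ≥0∞) ^ ((m : ℝ) * p' / p) * ENNReal.ofReal (a m) ^ p'
      ≤ ∑' x : FreeGroup (Fin r),
          (conv (fun y => ENNReal.ofReal (a (wlen y))) (sphInd n) x) ^ p' := by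
  have : Nonempty (Fin r) := ⟨⟨0, by omega⟩⟩
  have hpp' : p.HolderConjugate p' := (Real.holderConjugate_iff_eq_conjExponent hp1).2 hp'
  have hq_card : 2 * Fintype.card (Fin r) - 1 = q := by rw [Fintype.card_fin, hq]
  have hq0 : (q : ℝ≥0∞) ≠ 0 := by rw [hq]; exact_mod_cast (by omega : 2 * r - 1 ≠ 0)
  set A : ℕ → ℝ≥0∞ := fun m => ENNReal.ofReal (a m)
  calc (q : ℝ≥0∞) ^ n * ∑ m ∈ Finset.range (n + 1), (q : ℝ≥0∞) ^ ((m : ℝ) * p' / p) * A m ^ p'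
      = ∑ m ∈ Finset.range (n + 1), (q : ℝ≥0∞) ^ (n - m) * ((q : ℝ≥0∞) ^ m * A m) ^ p' := by
        rw [Finset.mul_sum]
        exact Finset.sum_congr rfl fun m hm => ENNReal.pow_mul_rpow_eq_pow_sub_mul_rpow hq0
          (ENNReal.natCast_ne_top q) hpp' (Finset.mem_range_succ_iff.1 hm) _
    _ = ∑ k ∈ Finset.range (n + 1), (q : ℝ≥0∞) ^ k * ((q : ℝ≥0∞) ^ (n - k) * A (n - k)) ^ p' := by
        rw [← Finset.sum_range_reflect]
        refine Finset.sum_congr rfl fun k hk => ?_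
        rw [Finset.mem_range] at hk
        rw [show n - (n + 1 - 1 - k) = k by omega, show n + 1 - 1 - k = n - k by omega]
    _ ≤ ∑' x : FreeGroup (Fin r), (conv (fun y => A (wlen y)) (sphInd n) x) ^ p' := by
        rw [← hq_card]
        refine sum_pow_mul_le_tsum _ _ _ fun x hx => ?_
        rw [Finset.mem_range] at hx
        exact ENNReal.rpow_le_rpow (pow_mul_le_conv_sphInd A x (by omega)) hpp'.symm.nonneg

/-- For `1 < p < 2`, `p' = p/(p-1)`, a nonnegative radial function `f = Σ f_k χ_k` and
every `n`, one has `Σ_x ((f ∗ χ_n)(x))^{p'} ≥ q^n Σ_{m=0}^n q^{m p'/p} f_m^{p'}`. -/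
theorem radial_conv_sphere_lower_lp
    (r : ℕ) (hr : 2 ≤ r) (q : ℕ) (hq : q = 2 * r - 1)
    (p : ℝ) (hp1 : 1 < p) (hp2 : p < 2) (p' : ℝ) (hp' : p' = p / (p - 1))
    (a : ℕ → ℝ) (ha : ∀ k, 0 ≤ a k) (n : ℕ) :
    (q : ℝ≥0∞) ^ n *
        ∑ m ∈ Finset.range (n + 1),
          (q : ℝ≥0∞) ^ ((m : ℝ) * p' / p) * ENNReal.ofReal (a m) ^ p'
      ≤ ∑' x : FreeGroup (Fin r),
          (conv (fun y => ENNReal.ofReal (a (wlen y))) (sphInd n) x) ^ p' :=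
  radial_conv_sphere_lower_lp_general r hr q hq p hp1 p' hp' a n
end
end
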